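/- arXiv:2506.02305 — 4 statements merged into one kernel-verified Lean document; each statement's English description precedes it below -/
import Mathlib

section
/- Let N ≥ 2, x ∈ ℝ^N with x_N > 0, 0 ≤ ε < 1. Then for all y with y_N > 0 and y ≠ x, |∇_y G^x_ε(y)|² ≤ (C'_N)² · x_N² / (ε² + |x - y|²)^N · ((1+N)² + N²), where C'_N = 2/σ_N. -/
open Filter

/-- Surface measure of the unit sphere in `ℝ^N`: `σ_N = 2 π^(N/2) / Γ(N/2)`. -/
noncomputable def sigmaN (N : ℕ) : ℝ := 2 * Real.pi ^ ((N : ℝ) / 2) / Real.Gamma ((N : ℝ) / 2)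

/-- `C_N⁻¹ = σ_N max{N-2, 1}`. -/
noncomputable def constCN (N : ℕ) : ℝ := 1 / (sigmaN N * max ((N : ℝ) - 2) 1)

/-- `C'_N = 2 / σ_N`. -/
noncomputable def constC'N (N : ℕ) : ℝ := 2 / sigmaN N

/-- Reflection of a point of `ℝ^N` across the hyperplane `{x_N = 0}`. -/
noncomputable def reflectPt {N : ℕ} (x : EuclideanSpace ℝ (Fin N)) :
    EuclideanSpace ℝ (Fin N) :=
  WithLp.toLp 2 (fun i => if i.val = N - 1 then -(x i) else x i)

/-- Regularized fundamental solution of `-Δ` on `ℝ^N`. -/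
noncomputable def GammaEps (N : ℕ) (ε : ℝ) (x y : EuclideanSpace ℝ (Fin N)) : ℝ :=
  if N = 2 then -(constCN 2 / 2) * Real.log (ε ^ 2 + ‖x - y‖ ^ 2)
  else constCN N * (ε ^ 2 + ‖x - y‖ ^ 2) ^ (-(((N : ℝ) - 2) / 2))

/-- Regularized Green function of `-Δ` on the half-space, via reflection. -/
noncomputable def GEps (N : ℕ) (ε : ℝ) (x y : EuclideanSpace ℝ (Fin N)) : ℝ :=
  GammaEps N ε x y - GammaEps N ε (reflectPt x) y

lemma sigmaN_pos (N : ℕ) (hN : 2 ≤ N) : 0 < sigmaN N := by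
  have h1 : (0:ℝ) < (N:ℝ)/2 := by positivity
  have := Real.Gamma_pos_of_pos h1
  have := Real.pi_pos
  unfold sigmaN
  positivity

lemma hasFDerivAt_base (N : ℕ) (ε : ℝ) (x y : EuclideanSpace ℝ (Fin N)) :
    HasFDerivAt (fun z : EuclideanSpace ℝ (Fin N) => ε ^ 2 + ‖x - z‖ ^ 2)
      ((2 : ℕ) • (innerSL ℝ (x - y)).comp
        ((0 : EuclideanSpace ℝ (Fin N) →L[ℝ] EuclideanSpace ℝ (Fin N))
          - ContinuousLinearMap.id ℝ (EuclideanSpace ℝ (Fin N)))) y := by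
  have h1 : HasFDerivAt (fun z : EuclideanSpace ℝ (Fin N) => x - z)
      ((0 : EuclideanSpace ℝ (Fin N) →L[ℝ] EuclideanSpace ℝ (Fin N))
        - ContinuousLinearMap.id ℝ (EuclideanSpace ℝ (Fin N))) y :=
    (hasFDerivAt_const x y).sub (hasFDerivAt_id y)
  have := (hasFDerivAt_const (ε^2) y).add h1.norm_sq
  rwa [zero_add] at this

lemma hasGradientAt_GammaEps (N : ℕ) (hN : 2 ≤ N) (ε : ℝ)
    (x y : EuclideanSpace ℝ (Fin N)) (ha : 0 < ε ^ 2 + ‖x - y‖ ^ 2) :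
    HasGradientAt (fun z => GammaEps N ε x z)
      (((sigmaN N)⁻¹ * (ε ^ 2 + ‖x - y‖ ^ 2) ^ (-(N:ℝ)/2)) • (x - y)) y := by
  set a := ε ^ 2 + ‖x - y‖ ^ 2 with ha_def
  have hσ := sigmaN_pos N hN
  rw [hasGradientAt_iff_hasFDerivAt]
  have hbase := hasFDerivAt_base N ε x y
  rcases eq_or_lt_of_le hN with h2 | h3
  · -- N = 2
    have hN2 : N = 2 := h2.symm
    subst hN2
    have hlog : HasDerivAt Real.log a⁻¹ a := Real.hasDerivAt_log ha.ne'
    have hcomp := (hlog.comp_hasFDerivAt y hbase).const_mul (-(constCN 2 / 2))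
    have heq : (fun z : EuclideanSpace ℝ (Fin 2) => GammaEps 2 ε x z)
        = fun z => -(constCN 2 / 2) * Real.log (ε ^ 2 + ‖x - z‖ ^ 2) := by
      funext z; simp [GammaEps]
    rw [heq]
    convert hcomp using 1
    · rfl
    · rfl
    ext v
    have hC : constCN 2 = (sigmaN 2)⁻¹ := by
      simp [constCN]
    simp only [InnerProductSpace.toDual_apply_apply, real_inner_smul_left,
      ContinuousLinearMap.smul_apply, ContinuousLinearMap.comp_apply,
      ContinuousLinearMap.sub_apply, ContinuousLinearMap.zero_apply,
      ContinuousLinearMap.id_apply, innerSL_apply_apply, smul_eq_mul,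
      inner_sub_right, inner_zero_right, hC]
    rw [show -((2:ℕ):ℝ)/2 = (-1 : ℝ) by norm_num, Real.rpow_neg_one]
    ring
  · -- N ≥ 3
    have hne2 : N ≠ 2 := by omega
    set r : ℝ := -(((N : ℝ) - 2) / 2) with hr
    have hrpow : HasDerivAt (fun t : ℝ => t ^ r) (r * a ^ (r - 1)) a :=
      Real.hasDerivAt_rpow_const (Or.inl ha.ne')
    have hcomp := (hrpow.comp_hasFDerivAt y hbase).const_mul (constCN N)
    have heq : (fun z : EuclideanSpace ℝ (Fin N) => GammaEps N ε x z)
        = fun z => constCN N * (ε ^ 2 + ‖x - z‖ ^ 2) ^ r := by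
      funext z; simp [GammaEps, hne2, hr]
    rw [heq]
    convert hcomp using 1
    · rfl
    · rfl
    ext v
    have hmax : max ((N : ℝ) - 2) 1 = (N : ℝ) - 2 := by
      apply max_eq_left
      have : (3:ℝ) ≤ (N:ℝ) := by exact_mod_cast h3
      linarith
    have hC : constCN N = (sigmaN N)⁻¹ * ((N:ℝ) - 2)⁻¹ := by
      rw [constCN, hmax, one_div, mul_inv]
    have hexp : a ^ (r - 1) = a ^ (-(N:ℝ)/2) := by
      congr 1
      rw [hr]; ring
    simp only [InnerProductSpace.toDual_apply_apply, real_inner_smul_left,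
      ContinuousLinearMap.smul_apply, ContinuousLinearMap.comp_apply,
      ContinuousLinearMap.sub_apply, ContinuousLinearMap.zero_apply,
      ContinuousLinearMap.id_apply, innerSL_apply_apply, smul_eq_mul,
      inner_sub_right, inner_zero_right, hC, hexp]
    have hN2ne : ((N:ℝ) - 2) ≠ 0 := by
      have : (3:ℝ) ≤ (N:ℝ) := by exact_mod_cast h3
      linarith
    field_simp
    ring

lemma eucl_norm_sq {N : ℕ} (v : EuclideanSpace ℝ (Fin N)) : ‖v‖ ^ 2 = ∑ i, (v i) ^ 2 := by
  rw [EuclideanSpace.norm_eq, Real.sq_sqrt (by positivity)]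
  simp [sq_abs]

set_option maxHeartbeats 1000000 in
/-- Upper gradient bound:
`|∇_y G^x_ε(y)|² ≤ C'_N² x_N² / (ε² + |x-y|²)^N · ((1+N)² + N²)`. -/
theorem stmt_6 (N : ℕ) (hN : 2 ≤ N) (ε : ℝ) (hε0 : 0 ≤ ε) (hε1 : ε < 1)
    (x y : EuclideanSpace ℝ (Fin N))
    (hx : 0 < x ⟨N - 1, by omega⟩) (hy : 0 < y ⟨N - 1, by omega⟩) (hxy : y ≠ x) :
    ‖gradient (fun z => GEps N ε x z) y‖ ^ 2 ≤
      (constC'N N) ^ 2 * (x ⟨N - 1, by omega⟩) ^ 2 / (ε ^ 2 + ‖x - y‖ ^ 2) ^ N *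
        ((1 + (N : ℝ)) ^ 2 + (N : ℝ) ^ 2) := by
  have hσ := sigmaN_pos N hN
  set e : Fin N := ⟨N - 1, by omega⟩ with he
  set xh := reflectPt x with hxh
  have hxhe : xh e = -(x e) := by
    simp only [hxh, reflectPt]
    simp [he]
  have hxhi : ∀ i : Fin N, i ≠ e → xh i = x i := by
    intro i hi
    simp only [hxh, reflectPt]
    rw [if_neg]
    intro h
    exact hi (Fin.ext h)
  have hxy' : x ≠ y := fun h => hxy h.symm
  have h1pos : 0 < ε ^ 2 + ‖x - y‖ ^ 2 := by
    have h0 : x - y ≠ 0 := sub_ne_zero.mpr hxy'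
    have := norm_pos_iff.mpr h0
    positivity
  have hxhy : xh ≠ y := by
    intro h
    have h1 := congrArg (fun v => v e) h
    rw [hxhe] at h1
    simp only [he] at h1 hx hy
    linarith
  have h2pos : 0 < ε ^ 2 + ‖xh - y‖ ^ 2 := by
    have h0 : xh - y ≠ 0 := sub_ne_zero.mpr hxhy
    have := norm_pos_iff.mpr h0
    positivity
  have hsum1 : ‖x - y‖ ^ 2 = ∑ i, (x i - y i) ^ 2 := by rw [eucl_norm_sq]; rfl
  have hsum2 : ‖xh - y‖ ^ 2 = ∑ i, (xh i - y i) ^ 2 := by rw [eucl_norm_sq]; rfl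
  -- a₂ - a₁ = 4 x_N y_N
  have hdiff : ‖xh - y‖ ^ 2 - ‖x - y‖ ^ 2 = 4 * x e * y e := by
    rw [hsum1, hsum2, ← Finset.sum_sub_distrib, Finset.sum_eq_single e]
    · rw [hxhe]; ring
    · intro i _ hi; rw [hxhi i hi]; ring
    · intro h; exact absurd (Finset.mem_univ e) h
  -- a₁ ≤ a₂
  have hle : ‖x - y‖ ^ 2 ≤ ‖xh - y‖ ^ 2 := by
    rw [hsum1, hsum2]
    apply Finset.sum_le_sum
    intro i _
    by_cases hi : i = e
    · subst hi; rw [hxhe]; nlinarith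
    · rw [hxhi i hi]
  -- y_N ‖x - y‖ ≤ a₂
  have hyN2 : (y e) ^ 2 ≤ ‖xh - y‖ ^ 2 := by
    have h1 : (xh e - y e) ^ 2 ≤ ∑ i, (xh i - y i) ^ 2 :=
      Finset.single_le_sum (f := fun i => (xh i - y i) ^ 2) (fun i _ => sq_nonneg _) (Finset.mem_univ e)
    rw [← hsum2] at h1
    rw [hxhe] at h1
    nlinarith
  have hkey6 : y e * ‖x - y‖ ≤ ε ^ 2 + ‖xh - y‖ ^ 2 := by
    have h1 : ‖x - y‖ ^ 2 ≤ ε ^ 2 + ‖xh - y‖ ^ 2 := by nlinarith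
    have h2 : (y e) ^ 2 ≤ ε ^ 2 + ‖xh - y‖ ^ 2 := by nlinarith
    nlinarith [sq_nonneg (y e - ‖x - y‖), norm_nonneg (x - y), hy.le]
  -- ‖x - xh‖ = 2 x_N
  have hxxh : ‖x - xh‖ = 2 * x e := by
    have hsq : ‖x - xh‖ ^ 2 = (2 * x e) ^ 2 := by
      rw [show ‖x - xh‖ ^ 2 = ∑ i, (x i - xh i) ^ 2 by rw [eucl_norm_sq]; rfl,
        Finset.sum_eq_single e]
      · rw [hxhe]; ring
      · intro i _ hi; rw [hxhi i hi]; ring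
      · intro h; exact absurd (Finset.mem_univ e) h
    calc ‖x - xh‖ = Real.sqrt (‖x - xh‖ ^ 2) := (Real.sqrt_sq (norm_nonneg _)).symm
      _ = Real.sqrt ((2 * x e) ^ 2) := by rw [hsq]
      _ = 2 * x e := Real.sqrt_sq (by linarith)
  -- the gradient
  set a1 := ε ^ 2 + ‖x - y‖ ^ 2 with ha1
  set a2 := ε ^ 2 + ‖xh - y‖ ^ 2 with ha2
  set A := a1 ^ (-(N:ℝ)/2) with hA
  set B := a2 ^ (-(N:ℝ)/2) with hB
  have hApos : 0 < A := Real.rpow_pos_of_pos h1pos _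
  have hBpos : 0 < B := Real.rpow_pos_of_pos h2pos _
  have hg1 := hasGradientAt_GammaEps N hN ε x y h1pos
  have hg2 := hasGradientAt_GammaEps N hN ε xh y h2pos
  have hG : HasGradientAt (fun z => GEps N ε x z)
      (((sigmaN N)⁻¹ * A) • (x - y) - ((sigmaN N)⁻¹ * B) • (xh - y)) y := by
    rw [hasGradientAt_iff_hasFDerivAt, map_sub]
    exact hg1.hasFDerivAt.sub hg2.hasFDerivAt
  rw [hG.gradient]
  -- rewrite the gradient vector
  have hrw : ((sigmaN N)⁻¹ * A) • (x - y) - ((sigmaN N)⁻¹ * B) • (xh - y)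
      = (sigmaN N)⁻¹ • ((A - B) • (x - y) + B • (x - xh)) := by
    module
  -- B ≤ A
  have hBA : B ≤ A := by
    rw [hA, hB, show -(N:ℝ)/2 = -((N:ℝ)/2) by ring,
      Real.rpow_neg h1pos.le, Real.rpow_neg h2pos.le]
    have h1 : a1 ^ ((N:ℝ)/2) ≤ a2 ^ ((N:ℝ)/2) :=
      Real.rpow_le_rpow h1pos.le (by rw [ha1, ha2]; linarith) (by positivity)
    exact inv_anti₀ (Real.rpow_pos_of_pos h1pos _) h1
  -- convexity bound : A - B ≤ A * (N/2) * (a2 - a1) / a2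
  have hconv : A - B ≤ A * ((N:ℝ)/2) * ((a2 - a1) / a2) := by
    set u := a1 / a2 with hu
    have hu0 : 0 < u := div_pos h1pos h2pos
    have hu1 : u ≤ 1 := (div_le_one h2pos).mpr (by rw [ha1, ha2]; linarith)
    have hbern : 1 + ((N:ℝ)/2) * (u - 1) ≤ u ^ ((N:ℝ)/2) := by
      have := one_add_mul_self_le_rpow_one_add (s := u - 1) (by linarith)
        (p := (N:ℝ)/2) (by
          have h2N : (2:ℝ) ≤ (N:ℝ) := by exact_mod_cast hN
          linarith)
      simpa using this
    have hBu : B = A * u ^ ((N:ℝ)/2) := by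
      rw [hA, hB, hu, Real.div_rpow h1pos.le h2pos.le,
        show -(N:ℝ)/2 = -((N:ℝ)/2) by ring,
        Real.rpow_neg h1pos.le, Real.rpow_neg h2pos.le]
      have h1 : a1 ^ ((N:ℝ)/2) ≠ 0 := (Real.rpow_pos_of_pos h1pos _).ne'
      field_simp
    have h1u : 1 - u = (a2 - a1) / a2 := by
      rw [hu]; field_simp
    rw [hBu, ← h1u]
    have : 1 - u ^ ((N:ℝ)/2) ≤ ((N:ℝ)/2) * (1 - u) := by nlinarith
    nlinarith [hApos.le, mul_le_mul_of_nonneg_left this hApos.le]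
  -- combine
  have hd : a2 - a1 = 4 * x e * y e := by rw [ha1, ha2]; linarith
  have hstep1 : (A - B) * ‖x - y‖ ≤ 2 * (N:ℝ) * x e * A := by
    calc (A - B) * ‖x - y‖ ≤ (A * ((N:ℝ)/2) * ((a2 - a1) / a2)) * ‖x - y‖ :=
          mul_le_mul_of_nonneg_right hconv (norm_nonneg _)
      _ = A * ((N:ℝ)/2) * 4 * x e * (y e * ‖x - y‖ / a2) := by rw [hd]; ring
      _ ≤ A * ((N:ℝ)/2) * 4 * x e * 1 := by
          apply mul_le_mul_of_nonneg_left
          · rw [div_le_one h2pos]; exact hkey6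
          · have hN0 : (0:ℝ) ≤ (N:ℝ) := by positivity
            positivity
      _ = 2 * (N:ℝ) * x e * A := by ring
  have htot : ‖((sigmaN N)⁻¹ * A) • (x - y) - ((sigmaN N)⁻¹ * B) • (xh - y)‖
      ≤ (sigmaN N)⁻¹ * (2 * x e * ((N:ℝ) + 1) * A) := by
    rw [hrw, norm_smul]
    rw [Real.norm_eq_abs, abs_of_pos (by positivity)]
    apply mul_le_mul_of_nonneg_left _ (by positivity)
    calc ‖(A - B) • (x - y) + B • (x - xh)‖
        ≤ ‖(A - B) • (x - y)‖ + ‖B • (x - xh)‖ := norm_add_le _ _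
      _ = (A - B) * ‖x - y‖ + B * (2 * x e) := by
          rw [norm_smul, norm_smul, Real.norm_eq_abs, Real.norm_eq_abs,
            abs_of_nonneg (by linarith), abs_of_pos hBpos, hxxh]
      _ ≤ 2 * (N:ℝ) * x e * A + A * (2 * x e) := by
          have : B * (2 * x e) ≤ A * (2 * x e) :=
            mul_le_mul_of_nonneg_right hBA (by linarith)
          linarith
      _ = 2 * x e * ((N:ℝ) + 1) * A := by ring
  have hsq := pow_le_pow_left₀ (norm_nonneg _) htot 2
  refine le_trans hsq ?_
  have hA2 : A ^ 2 = (a1 ^ N)⁻¹ := by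
    rw [hA, ← Real.rpow_natCast (a1 ^ (-(N:ℝ)/2)) 2, ← Real.rpow_mul h1pos.le]
    rw [show -(N:ℝ)/2 * ((2:ℕ):ℝ) = -(N:ℝ) by push_cast; ring]
    rw [Real.rpow_neg h1pos.le, Real.rpow_natCast]
  have hC' : constC'N N = 2 / sigmaN N := rfl
  rw [hC']
  have hexp : ((sigmaN N)⁻¹ * (2 * x e * ((N:ℝ) + 1) * A)) ^ 2
      = (2 / sigmaN N) ^ 2 * (x e) ^ 2 / a1 ^ N * (1 + (N:ℝ)) ^ 2 := by
    have hstep : ((sigmaN N)⁻¹ * (2 * x e * ((N:ℝ) + 1) * A)) ^ 2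
        = ((sigmaN N)⁻¹) ^ 2 * (2 * x e * ((N:ℝ) + 1)) ^ 2 * A ^ 2 := by ring
    rw [hstep, hA2]
    have ha1N : (a1:ℝ) ^ N ≠ 0 := by positivity
    field_simp
    ring
  rw [hexp]
  have hpos : (0:ℝ) ≤ (2 / sigmaN N) ^ 2 * (x e) ^ 2 / a1 ^ N := by positivity
  nlinarith [sq_nonneg ((N:ℝ)), mul_le_mul_of_nonneg_left
    (le_add_of_nonneg_right (sq_nonneg ((N:ℝ))) : (1 + (N:ℝ))^2 ≤ (1+(N:ℝ))^2 + (N:ℝ)^2) hpos]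
end

section
/- Let N ≥ 2, 1 ≤ p < ∞, and let u : ℝ^N_+ → ℝ be measurable with ∫_{ℝ^N_+} y_N |u(y)|^p dy < ∞. Then for every x ∈ ℝ^N_+, (1/R^(N+2)) ∫_{{y_N>0} ∩ {R < |x-y|_* < 2R}} y_N |u(y)| dy → 0 as R → ∞, where |z|_* = max{|z'|, |z_N|} is the cylindrical norm. -/
open Filter MeasureTheory
open scoped ENNReal

set_option maxHeartbeats 1000000 in
/-- Weighted `L^p` functions on the half-space satisfy the weighted ring
condition `(R⁺₀)`: if `∫_{ℝ^N_+} y_N |u(y)|^p dy < ∞` (`1 ≤ p < ∞`), then for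
every point `x` of the half-space,
`R^-(N+2) ∫_{{y_N>0} ∩ {R < |x-y|_* < 2R}} y_N |u(y)| dy → 0` as `R → ∞`,
where `|z|_* = max{|z'|, |z_N|}` is the cylindrical norm. -/
theorem stmt_10 (N : ℕ) (hN : 2 ≤ N) (p : ℝ) (hp : 1 ≤ p)
    (u : EuclideanSpace ℝ (Fin (N - 1)) × ℝ → ℝ) (hu : Measurable u)
    (hint : ∫⁻ y in {y : EuclideanSpace ℝ (Fin (N - 1)) × ℝ | 0 < y.2},
        ENNReal.ofReal (y.2 * |u y| ^ p) < ⊤) :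
    ∀ x : EuclideanSpace ℝ (Fin (N - 1)) × ℝ, 0 < x.2 →
      Tendsto (fun R : ℝ =>
          (1 / R ^ (N + 2)) *
            ∫ y in {y : EuclideanSpace ℝ (Fin (N - 1)) × ℝ |
                0 < y.2 ∧ R < max ‖x.1 - y.1‖ |x.2 - y.2| ∧
                  max ‖x.1 - y.1‖ |x.2 - y.2| < 2 * R},
              y.2 * |u y|)
        atTop (nhds 0) := by
  intro x hx
  set A : ℝ≥0∞ := ∫⁻ y in {y : EuclideanSpace ℝ (Fin (N - 1)) × ℝ | 0 < y.2},
      ENNReal.ofReal (y.2 * |u y| ^ p) with hAdef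
  have hA : A ≠ ⊤ := hint.ne
  set c : ℝ≥0∞ := volume (Metric.closedBall (0 : EuclideanSpace ℝ (Fin (N - 1))) 1) with hcdef
  have hc : c ≠ ⊤ := measure_closedBall_lt_top.ne
  set K : ℝ := 9 * 2 ^ (N - 1) * c.toReal with hKdef
  have hK0 : 0 ≤ K := by
    have := ENNReal.toReal_nonneg (a := c)
    positivity
  set S : ℝ → Set (EuclideanSpace ℝ (Fin (N - 1)) × ℝ) := fun R =>
    {y : EuclideanSpace ℝ (Fin (N - 1)) × ℝ |
      0 < y.2 ∧ R < max ‖x.1 - y.1‖ |x.2 - y.2| ∧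
        max ‖x.1 - y.1‖ |x.2 - y.2| < 2 * R} with hSdef
  have hcont : Continuous (fun y : EuclideanSpace ℝ (Fin (N - 1)) × ℝ =>
      max ‖x.1 - y.1‖ |x.2 - y.2|) :=
    ((continuous_const.sub continuous_fst).norm).max ((continuous_const.sub continuous_snd).abs)
  have hmeasS : ∀ R : ℝ, MeasurableSet (S R) := fun R =>
    (measurableSet_lt measurable_const measurable_snd).inter
      ((measurableSet_lt measurable_const hcont.measurable).inter
        (measurableSet_lt hcont.measurable measurable_const))
  -- the dominating function tends to zero
  have hg : Tendsto (fun R : ℝ => (A.toReal + K * R ^ (N + 1)) / R ^ (N + 2)) atTop (nhds 0) := by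
    have t1 : Tendsto (fun R : ℝ => (R ^ (N + 2))⁻¹) atTop (nhds 0) :=
      (tendsto_pow_atTop (by omega)).inv_tendsto_atTop
    have t2 : Tendsto (fun R : ℝ => R⁻¹) atTop (nhds (0 : ℝ)) := tendsto_inv_atTop_zero
    have h1 : Tendsto (fun R : ℝ => A.toReal * (R ^ (N + 2))⁻¹ + K * R⁻¹) atTop (nhds 0) := by
      simpa using (t1.const_mul A.toReal).add (t2.const_mul K)
    apply h1.congr'
    filter_upwards [eventually_gt_atTop (0 : ℝ)] with R hR
    have hRn : R ^ (N + 2) ≠ 0 := by positivity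
    have hR0 : R ≠ 0 := ne_of_gt hR
    field_simp
    ring
  -- the key bound
  have key : ∀ R : ℝ, 1 ≤ R → x.2 ≤ R →
      (1 / R ^ (N + 2)) * ∫ y in S R, y.2 * |u y| ≤ (A.toReal + K * R ^ (N + 1)) / R ^ (N + 2) := by
    intro R hR1 hxR
    have hRpos : (0 : ℝ) < R := lt_of_lt_of_le one_pos hR1
    have hSm := hmeasS R
    have hInt : ∫ y in S R, y.2 * |u y|
        = (∫⁻ y in S R, ENNReal.ofReal (y.2 * |u y|)).toReal := by
      apply integral_eq_lintegral_of_nonneg_ae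
      · filter_upwards [ae_restrict_mem hSm] with y hy
        exact mul_nonneg hy.1.le (abs_nonneg _)
      · exact (measurable_snd.mul hu.abs).aestronglyMeasurable
    have hsub : S R ⊆ (Metric.closedBall x.1 (2 * R)) ×ˢ (Set.Ioo 0 (3 * R)) := by
      rintro y ⟨h1, h2, h3⟩
      have hmax1 : ‖x.1 - y.1‖ < 2 * R := (le_max_left _ _).trans_lt h3
      have hmax2 : |x.2 - y.2| < 2 * R := (le_max_right _ _).trans_lt h3
      have habs := abs_lt.mp hmax2
      constructor
      · rw [Metric.mem_closedBall, dist_eq_norm, norm_sub_rev]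
        exact hmax1.le
      · exact ⟨h1, by linarith [habs.1]⟩
    have hle1 : (∫⁻ y in S R, ENNReal.ofReal (y.2 * |u y|))
        ≤ A + ENNReal.ofReal (K * R ^ (N + 1)) := by
      calc (∫⁻ y in S R, ENNReal.ofReal (y.2 * |u y|))
          ≤ ∫⁻ y in S R, (ENNReal.ofReal (y.2 * |u y| ^ p) + ENNReal.ofReal y.2) := by
            apply setLIntegral_mono' hSm
            intro y hy
            have h2 : (0 : ℝ) < y.2 := hy.1
            have hup : (0 : ℝ) ≤ |u y| ^ p := Real.rpow_nonneg (abs_nonneg _) p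
            have habs : |u y| ≤ |u y| ^ p + 1 := by
              rcases le_total (|u y|) 1 with h | h
              · nlinarith
              · have h' := Real.rpow_le_rpow_of_exponent_le h hp
                rw [Real.rpow_one] at h'
                nlinarith
            calc ENNReal.ofReal (y.2 * |u y|)
                ≤ ENNReal.ofReal (y.2 * |u y| ^ p + y.2) := by
                  apply ENNReal.ofReal_le_ofReal; nlinarith
              _ = _ := ENNReal.ofReal_add (mul_nonneg h2.le hup) h2.le
        _ = (∫⁻ y in S R, ENNReal.ofReal (y.2 * |u y| ^ p))
            + ∫⁻ y in S R, ENNReal.ofReal y.2 :=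
            lintegral_add_right _ measurable_snd.ennreal_ofReal
        _ ≤ A + ENNReal.ofReal (K * R ^ (N + 1)) := by
            refine add_le_add (lintegral_mono_set fun y hy => hy.1) ?_
            calc (∫⁻ y in S R, ENNReal.ofReal y.2)
                ≤ ∫⁻ y in (Metric.closedBall x.1 (2 * R)) ×ˢ (Set.Ioo 0 (3 * R)),
                    ENNReal.ofReal y.2 := lintegral_mono_set hsub
              _ ≤ ∫⁻ _ in (Metric.closedBall x.1 (2 * R)) ×ˢ (Set.Ioo 0 (3 * R)),
                    ENNReal.ofReal (3 * R) :=
                  setLIntegral_mono measurable_const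
                    (fun y hy => ENNReal.ofReal_le_ofReal hy.2.2.le)
              _ = ENNReal.ofReal (3 * R)
                  * volume ((Metric.closedBall x.1 (2 * R)) ×ˢ (Set.Ioo 0 (3 * R))) :=
                  setLIntegral_const _ _
              _ = ENNReal.ofReal (3 * R)
                  * ((ENNReal.ofReal ((2 * R) ^ (N - 1)) * c) * ENNReal.ofReal (3 * R)) := by
                  rw [Measure.volume_eq_prod, Measure.prod_prod, Real.volume_Ioo,
                    Measure.addHaar_closedBall' volume x.1 (by positivity),
                    finrank_euclideanSpace_fin]
                  norm_num
                  rfl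
              _ = ENNReal.ofReal (K * R ^ (N + 1)) := by
                  rw [← ENNReal.ofReal_toReal hc,
                    ← ENNReal.ofReal_mul (by positivity),
                    ← ENNReal.ofReal_mul (by positivity),
                    ← ENNReal.ofReal_mul (by positivity)]
                  congr 1
                  have he : N - 1 + 2 = N + 1 := by omega
                  rw [hKdef, mul_pow, ← he, pow_add]
                  ring
    have htoReal : (∫⁻ y in S R, ENNReal.ofReal (y.2 * |u y|)).toReal
        ≤ A.toReal + K * R ^ (N + 1) := by
      have hfin : A + ENNReal.ofReal (K * R ^ (N + 1)) ≠ ⊤ :=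
        ENNReal.add_ne_top.mpr ⟨hA, ENNReal.ofReal_ne_top⟩
      have h := ENNReal.toReal_mono hfin hle1
      rwa [ENNReal.toReal_add hA ENNReal.ofReal_ne_top,
        ENNReal.toReal_ofReal (by positivity)] at h
    rw [hInt, one_div, inv_mul_eq_div]
    apply div_le_div_of_nonneg_right htoReal (by positivity)
  -- squeeze
  refine tendsto_of_tendsto_of_tendsto_of_le_of_le' tendsto_const_nhds hg ?_ ?_
  · filter_upwards [eventually_ge_atTop (1 : ℝ)] with R hR
    have hRpos : (0 : ℝ) < R := lt_of_lt_of_le one_pos hR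
    exact mul_nonneg (by positivity)
      (setIntegral_nonneg (hmeasS R) fun y hy => mul_nonneg hy.1.le (abs_nonneg _))
  · filter_upwards [eventually_ge_atTop (1 : ℝ), eventually_ge_atTop x.2] with R h1 h2
    exact key R h1 h2
end

section
/- Let N = 2 and u(x₁, x₂) = -1/(x₁² + x₂²) on the upper half-plane {x₂ > 0}. Then -Δu = 4/(x₁² + x₂²)² ≥ 0 on the half-plane (u is superharmonic), but u is not locally integrable up to the boundary: there is a bounded open set Ω ⊂ ℝ²_+ with ∫_Ω |u| = +∞. -/
open MeasureTheory ENNReal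

/-- `u(x₁,x₂) = -1/(x₁² + x₂²)` on the upper half-plane. -/
noncomputable def u14 : ℝ × ℝ → ℝ := fun x => -(1 / (x.1 ^ 2 + x.2 ^ 2))

lemma hd1_14 (c : ℝ) {x : ℝ} (hx : x ^ 2 + c ^ 2 ≠ 0) :
    HasDerivAt (fun t : ℝ => -(1 / (t ^ 2 + c ^ 2))) (2 * x / (x ^ 2 + c ^ 2) ^ 2) x := by
  have hd : HasDerivAt (fun t : ℝ => t ^ 2 + c ^ 2) (2 * x) x := by
    simpa using ((hasDerivAt_pow 2 x).add_const (c ^ 2))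
  have := (hd.fun_inv hx).fun_neg
  rw [show (fun t : ℝ => -(1 / (t ^ 2 + c ^ 2))) = fun i => -(i ^ 2 + c ^ 2)⁻¹ by simp [one_div]]
  exact this.congr_deriv (by ring)

lemma deriv1_14 (c : ℝ) {x : ℝ} (hx : x ^ 2 + c ^ 2 ≠ 0) :
    deriv (fun t : ℝ => -(1 / (t ^ 2 + c ^ 2))) x = 2 * x / (x ^ 2 + c ^ 2) ^ 2 :=
  (hd1_14 c hx).deriv

lemma deriv2_14 (c : ℝ) {x : ℝ} (hx : x ^ 2 + c ^ 2 ≠ 0) :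
    deriv (deriv (fun t : ℝ => -(1 / (t ^ 2 + c ^ 2)))) x
      = (2 * (x ^ 2 + c ^ 2) - 8 * x ^ 2) / (x ^ 2 + c ^ 2) ^ 3 := by
  have hopen : IsOpen {t : ℝ | t ^ 2 + c ^ 2 ≠ 0} :=
    isOpen_ne.preimage (by continuity)
  have hev : deriv (fun t : ℝ => -(1 / (t ^ 2 + c ^ 2)))
      =ᶠ[nhds x] fun t => 2 * t / (t ^ 2 + c ^ 2) ^ 2 := by
    filter_upwards [hopen.mem_nhds hx] with t ht using deriv1_14 c ht
  rw [Filter.EventuallyEq.deriv_eq hev]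
  have hd : HasDerivAt (fun t : ℝ => t ^ 2 + c ^ 2) (2 * x) x := by
    simpa using ((hasDerivAt_pow 2 x).add_const (c ^ 2))
  have hden : HasDerivAt (fun t : ℝ => ((t ^ 2 + c ^ 2) ^ 2 : ℝ))
      (2 * (x ^ 2 + c ^ 2) * (2 * x)) x := by
    simpa using hd.fun_pow 2
  have hnum : HasDerivAt (fun t : ℝ => (2 * t : ℝ)) 2 x := by
    simpa using (hasDerivAt_id x).const_mul 2
  have hden0 : ((x ^ 2 + c ^ 2) ^ 2 : ℝ) ≠ 0 := pow_ne_zero _ hx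
  have := (hnum.fun_div hden hden0).deriv
  rw [this]
  field_simp
  ring

def Q14 (n : ℕ) : Set (ℝ × ℝ) :=
  Set.Ioo ((1/2 : ℝ) ^ (n+1)) ((1/2 : ℝ) ^ n) ×ˢ Set.Ioo ((1/2 : ℝ) ^ (n+1)) ((1/2 : ℝ) ^ n)

lemma Q14_disj_aux {m n : ℕ} (h : m < n) : Disjoint (Q14 m) (Q14 n) := by
  rw [Set.disjoint_left]
  rintro x ⟨⟨h1, _⟩, _⟩ ⟨⟨_, h4⟩, _⟩
  have : (1/2 : ℝ) ^ n ≤ (1/2 : ℝ) ^ (m+1) :=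
    pow_le_pow_of_le_one (by norm_num) (by norm_num) h
  linarith

lemma Q14_pairwise : Pairwise (Function.onFun Disjoint Q14) := by
  intro m n hmn
  rcases hmn.lt_or_gt with h | h
  · exact Q14_disj_aux h
  · exact (Q14_disj_aux h).symm

lemma Q14_lb {n : ℕ} {x : ℝ × ℝ} (hx : x ∈ Q14 n) :
    ENNReal.ofReal ((2:ℝ) ^ (2*n) / 2) ≤ ENNReal.ofReal |u14 x| := by
  obtain ⟨⟨h1, h2⟩, h3, h4⟩ := hx
  have hp : (0:ℝ) < (1/2:ℝ) ^ (n+1) := by positivity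
  have hs : (0:ℝ) < x.1 ^ 2 + x.2 ^ 2 := by nlinarith
  have habs : |u14 x| = 1 / (x.1 ^ 2 + x.2 ^ 2) := by
    simp only [u14, abs_neg]
    exact abs_of_nonneg (by positivity)
  rw [habs]
  apply ENNReal.ofReal_le_ofReal
  have hB : x.1 ^ 2 + x.2 ^ 2 ≤ 2 * ((1/2:ℝ) ^ n) ^ 2 := by nlinarith
  have h5 : (1 : ℝ) / (2 * ((1/2:ℝ) ^ n) ^ 2) ≤ 1 / (x.1 ^ 2 + x.2 ^ 2) :=
    one_div_le_one_div_of_le hs hB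
  refine le_trans (le_of_eq ?_) h5
  have hne : (2:ℝ) ^ n ≠ 0 := by positivity
  rw [one_div_pow, pow_mul]
  field_simp
  ring_nf
  rw [pow_mul']
  norm_num

lemma Q14_integral_lb (n : ℕ) :
    (1/8 : ℝ≥0∞) ≤ ∫⁻ x in Q14 n, ENNReal.ofReal |u14 x| := by
  have hmeas : MeasurableSet (Q14 n) := measurableSet_Ioo.prod measurableSet_Ioo
  have h1 : ∫⁻ _ in Q14 n, ENNReal.ofReal ((2:ℝ) ^ (2*n) / 2)
      ≤ ∫⁻ x in Q14 n, ENNReal.ofReal |u14 x| :=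
    setLIntegral_mono' hmeas fun x hx => Q14_lb hx
  refine le_trans (le_of_eq ?_) h1
  rw [setLIntegral_const]
  have hvol : volume (Q14 n)
      = ENNReal.ofReal ((1/2:ℝ) ^ (n+1)) * ENNReal.ofReal ((1/2:ℝ) ^ (n+1)) := by
    rw [Q14, Measure.volume_eq_prod, Measure.prod_prod, Real.volume_Ioo]
    have : (1/2:ℝ) ^ n - (1/2:ℝ) ^ (n+1) = (1/2:ℝ) ^ (n+1) := by ring
    rw [this]
  rw [hvol, ← ENNReal.ofReal_mul (by positivity), ← ENNReal.ofReal_mul (by positivity)]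
  have hne : (2:ℝ) ^ n ≠ 0 := by positivity
  have : (2:ℝ) ^ (2*n) / 2 * (1/2:ℝ) ^ (n+1) * (1/2:ℝ) ^ (n+1) = 1/8 := by
    rw [one_div_pow, pow_mul, pow_succ]
    field_simp
    ring_nf
    rw [pow_mul']
    norm_num
  rw [show (2:ℝ)^(2*n)/2 * ((1/2:ℝ)^(n+1) * (1/2:ℝ)^(n+1)) = 1/8 by rw [← mul_assoc]; exact this]
  rw [show (1/8:ℝ) = (8:ℝ)⁻¹ by norm_num, ENNReal.ofReal_inv_of_pos (by norm_num)]
  norm_num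

/-- On the half-plane, `-Δ u14 = 4/(x₁²+x₂²)² ≥ 0` pointwise (so `u14` is
superharmonic), yet `u14` fails to be locally integrable up to the boundary:
some bounded open subset of the half-plane carries infinite integral of `|u14|`. -/
theorem stmt_14 :
    (∀ x : ℝ × ℝ, 0 < x.2 →
      -(deriv (deriv (fun t => u14 (t, x.2))) x.1 +
          deriv (deriv (fun t => u14 (x.1, t))) x.2) = 4 / (x.1 ^ 2 + x.2 ^ 2) ^ 2 ∧
      (0 : ℝ) ≤ 4 / (x.1 ^ 2 + x.2 ^ 2) ^ 2) ∧
    ∃ Ω : Set (ℝ × ℝ), IsOpen Ω ∧ Bornology.IsBounded Ω ∧ Ω ⊆ {x : ℝ × ℝ | 0 < x.2} ∧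
      ∫⁻ x in Ω, ENNReal.ofReal |u14 x| = ⊤ := by
  constructor
  · intro x hx
    have hs : (0:ℝ) < x.1 ^ 2 + x.2 ^ 2 := by positivity
    refine ⟨?_, by positivity⟩
    have h1 : deriv (deriv (fun t => u14 (t, x.2))) x.1
        = (2 * (x.1 ^ 2 + x.2 ^ 2) - 8 * x.1 ^ 2) / (x.1 ^ 2 + x.2 ^ 2) ^ 3 := by
      simpa [u14] using deriv2_14 x.2 (x := x.1) (by positivity)
    have h2 : deriv (deriv (fun t => u14 (x.1, t))) x.2
        = (2 * (x.2 ^ 2 + x.1 ^ 2) - 8 * x.2 ^ 2) / (x.2 ^ 2 + x.1 ^ 2) ^ 3 := by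
      have he : (fun t => u14 (x.1, t)) = fun t : ℝ => -(1 / (t ^ 2 + x.1 ^ 2)) := by
        funext t; simp [u14, add_comm]
      rw [he]; exact deriv2_14 x.1 (x := x.2) (by positivity)
    rw [h1, h2]
    have h3 : (0:ℝ) < x.2 ^ 2 + x.1 ^ 2 := by positivity
    field_simp
    ring
  · refine ⟨Set.Ioo 0 1 ×ˢ Set.Ioo 0 1, isOpen_Ioo.prod isOpen_Ioo,
      (Metric.isBounded_Ioo _ _).prod (Metric.isBounded_Ioo _ _), ?_, ?_⟩
    · rintro ⟨a, b⟩ ⟨_, hb, _⟩; exact hb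
    · have hsub : (⋃ n, Q14 n) ⊆ Set.Ioo 0 1 ×ˢ Set.Ioo (0:ℝ) 1 := by
        refine Set.iUnion_subset fun n => ?_
        rintro ⟨a, b⟩ ⟨⟨h1, h2⟩, h3, h4⟩
        have hp : (0:ℝ) < (1/2:ℝ) ^ (n+1) := by positivity
        have hle : (1/2:ℝ) ^ n ≤ 1 := pow_le_one₀ (by norm_num) (by norm_num)
        exact ⟨⟨by linarith, by linarith⟩, by linarith, by linarith⟩
      rw [eq_top_iff]
      calc (⊤ : ℝ≥0∞) = ∑' _ : ℕ, (1/8 : ℝ≥0∞) :=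
              (ENNReal.tsum_const_eq_top_of_ne_zero (by norm_num)).symm
        _ ≤ ∑' n, ∫⁻ x in Q14 n, ENNReal.ofReal |u14 x| :=
              ENNReal.tsum_le_tsum Q14_integral_lb
        _ = ∫⁻ x in ⋃ n, Q14 n, ENNReal.ofReal |u14 x| :=
              (lintegral_iUnion (fun n => measurableSet_Ioo.prod measurableSet_Ioo)
                Q14_pairwise _).symm
        _ ≤ _ := lintegral_mono_set hsub
end

section
/- Define, for x ∈ ℝ and ε > 0, u(x, ε) = ε^(-1/2) m_ε(x - ε) - ε^(-1/2) m_ε(x + ε), where m_ε(t) = ε^(-1) m₁(t/ε) and m₁ ∈ C_c^∞(ℝ) is an even nonnegative function supported in (-1,1) with ∫ m₁ = 1. Then for every ψ ∈ C_c²(ℝ), |∫_ℝ u(x, ε) ψ(x) dx| ≤ 2 √ε ‖ψ'‖_∞, and hence ∫_ℝ u(x, ε) ψ(x) dx → 0 as ε → 0⁺. -/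
open Filter MeasureTheory

/-- With `m_ε(t) = ε⁻¹ m₁(t/ε)` and
`u(x, ε) = ε^(-1/2) m_ε(x - ε) - ε^(-1/2) m_ε(x + ε)`, where `m₁ ∈ C_c^∞(ℝ)` is
even, nonnegative, supported in `(-1,1)` with `∫ m₁ = 1`, one has
`|∫ u(·, ε) ψ| ≤ 2 √ε ‖ψ'‖_∞` for every `ψ ∈ C_c²(ℝ)`, hence
`∫ u(·, ε) ψ → 0` as `ε → 0⁺`. -/
theorem stmt_15 (m₁ : ℝ → ℝ) (hsm : ContDiff ℝ (⊤ : ℕ∞) m₁)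
    (hsupp : ∀ t, t ∉ Set.Ioo (-1 : ℝ) 1 → m₁ t = 0)
    (heven : ∀ t, m₁ (-t) = m₁ t) (hpos : ∀ t, 0 ≤ m₁ t)
    (hint : ∫ t, m₁ t = 1)
    (ψ : ℝ → ℝ) (hψ : ContDiff ℝ 2 ψ) (hψc : HasCompactSupport ψ)
    (C : ℝ) (hC : ∀ t, |deriv ψ t| ≤ C) :
    (∀ ε > (0 : ℝ),
      |∫ t, (ε ^ (-(1 : ℝ) / 2) * (ε⁻¹ * m₁ ((t - ε) / ε)) -
          ε ^ (-(1 : ℝ) / 2) * (ε⁻¹ * m₁ ((t + ε) / ε))) * ψ t| ≤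
        2 * Real.sqrt ε * C) ∧
    Tendsto (fun ε : ℝ =>
        ∫ t, (ε ^ (-(1 : ℝ) / 2) * (ε⁻¹ * m₁ ((t - ε) / ε)) -
            ε ^ (-(1 : ℝ) / 2) * (ε⁻¹ * m₁ ((t + ε) / ε))) * ψ t)
      (nhdsWithin 0 (Set.Ioi 0)) (nhds 0) := by
  have hcm : HasCompactSupport m₁ :=
    HasCompactSupport.intro (isCompact_Icc (a := (-1 : ℝ)) (b := 1))
      (fun x hx => hsupp x (fun h => hx ⟨h.1.le, h.2.le⟩))
  have hm₁c : Continuous m₁ := hsm.continuous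
  have hψcont : Continuous ψ := hψ.continuous
  have hψdiff : Differentiable ℝ ψ := hψ.differentiable (by norm_num)
  have hC0 : 0 ≤ C := le_trans (abs_nonneg _) (hC 0)
  have key : ∀ ε > (0 : ℝ),
      |∫ t, (ε ^ (-(1 : ℝ) / 2) * (ε⁻¹ * m₁ ((t - ε) / ε)) -
          ε ^ (-(1 : ℝ) / 2) * (ε⁻¹ * m₁ ((t + ε) / ε))) * ψ t| ≤
        2 * Real.sqrt ε * C := by
    intro ε hε
    have hεne : ε ≠ 0 := ne_of_gt hε
    -- change of variables
    have cov : ∀ a : ℝ,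
        (∫ t, ε ^ (-(1 : ℝ) / 2) * (ε⁻¹ * m₁ ((t - a) / ε)) * ψ t)
          = ε ^ (-(1 : ℝ) / 2) * ∫ s, m₁ s * ψ (ε * s + a) := by
      intro a
      have h1 : ∀ t : ℝ, ε ^ (-(1 : ℝ) / 2) * (ε⁻¹ * m₁ ((t - a) / ε)) * ψ t
          = (ε ^ (-(1 : ℝ) / 2) * ε⁻¹) *
            ((fun s => m₁ s * ψ (ε * s + a)) ∘ (fun t => t / ε)) (t - a) := by
        intro t
        simp only [Function.comp_apply]
        rw [show ε * ((t - a) / ε) + a = t by field_simp; ring]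
        ring
      simp_rw [h1]
      rw [integral_const_mul, integral_sub_right_eq_self
        (((fun s => m₁ s * ψ (ε * s + a)) ∘ (fun t => t / ε))) a]
      simp only [Function.comp_def]
      rw [Measure.integral_comp_div (fun s => m₁ s * ψ (ε * s + a)) ε,
        smul_eq_mul, abs_of_pos hε]
      rw [show ε ^ (-(1 : ℝ) / 2) * ε⁻¹ * (ε * ∫ s, m₁ s * ψ (ε * s + a))
          = ε ^ (-(1 : ℝ) / 2) * (ε⁻¹ * ε) * ∫ s, m₁ s * ψ (ε * s + a) by ring,
        inv_mul_cancel₀ hεne, mul_one]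
    -- integrability of the two pieces
    have int1 : ∀ a : ℝ, Integrable
        (fun t => ε ^ (-(1 : ℝ) / 2) * (ε⁻¹ * m₁ ((t - a) / ε)) * ψ t) := by
      intro a
      apply Continuous.integrable_of_hasCompactSupport
      · exact (continuous_const.mul (continuous_const.mul
          (hm₁c.comp ((continuous_id.sub continuous_const).div_const ε)))).mul hψcont
      · exact (hψc.mul_left
          (f := fun t => ε ^ (-(1 : ℝ) / 2) * (ε⁻¹ * m₁ ((t - a) / ε))))
    have intm : ∀ a : ℝ, Integrable (fun s => m₁ s * ψ (ε * s + a)) := by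
      intro a
      apply Continuous.integrable_of_hasCompactSupport
      · exact hm₁c.mul (hψcont.comp ((continuous_const.mul continuous_id).add
          continuous_const))
      · exact (hcm.mul_right (f' := fun s => ψ (ε * s + a)))
    have split : (∫ t, (ε ^ (-(1 : ℝ) / 2) * (ε⁻¹ * m₁ ((t - ε) / ε)) -
          ε ^ (-(1 : ℝ) / 2) * (ε⁻¹ * m₁ ((t + ε) / ε))) * ψ t)
        = ε ^ (-(1 : ℝ) / 2) *
          ∫ s, m₁ s * (ψ (ε * s + ε) - ψ (ε * s + -ε)) := by
      have e1 : ∀ t : ℝ, (ε ^ (-(1 : ℝ) / 2) * (ε⁻¹ * m₁ ((t - ε) / ε)) -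
            ε ^ (-(1 : ℝ) / 2) * (ε⁻¹ * m₁ ((t + ε) / ε))) * ψ t
          = ε ^ (-(1 : ℝ) / 2) * (ε⁻¹ * m₁ ((t - ε) / ε)) * ψ t -
            ε ^ (-(1 : ℝ) / 2) * (ε⁻¹ * m₁ ((t - -ε) / ε)) * ψ t := by
        intro t; rw [show t - -ε = t + ε by ring]; ring
      simp_rw [e1]
      rw [integral_sub (int1 ε) (int1 (-ε)), cov ε, cov (-ε), ← mul_sub,
        ← integral_sub (intm ε) (intm (-ε))]
      congr 1
      apply integral_congr_ae
      filter_upwards with s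
      ring
    rw [split]
    have mvt : ∀ s : ℝ, |m₁ s * (ψ (ε * s + ε) - ψ (ε * s + -ε))|
        ≤ m₁ s * (2 * ε * C) := by
      intro s
      rw [abs_mul, abs_of_nonneg (hpos s)]
      apply mul_le_mul_of_nonneg_left _ (hpos s)
      have := Convex.norm_image_sub_le_of_norm_deriv_le (𝕜 := ℝ) (f := ψ)
        (s := Set.univ) (fun x _ => (hψdiff x)) (fun x _ => hC x)
        convex_univ (Set.mem_univ (ε * s + -ε)) (Set.mem_univ (ε * s + ε))
      calc |ψ (ε * s + ε) - ψ (ε * s + -ε)| ≤ C * ‖(ε * s + ε) - (ε * s + -ε)‖ := this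
        _ = 2 * ε * C := by
            rw [show (ε * s + ε) - (ε * s + -ε) = 2 * ε by ring,
              Real.norm_eq_abs, abs_of_pos (by linarith)]
            ring
    have hbd : |∫ s, m₁ s * (ψ (ε * s + ε) - ψ (ε * s + -ε))| ≤ 2 * ε * C := by
      calc |∫ s, m₁ s * (ψ (ε * s + ε) - ψ (ε * s + -ε))|
          ≤ ∫ s, m₁ s * (2 * ε * C) := by
            rw [← Real.norm_eq_abs]
            apply norm_integral_le_of_norm_le
            · exact (hm₁c.integrable_of_hasCompactSupport hcm).mul_const _
            · filter_upwards with s using mvt s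
        _ = 2 * ε * C := by rw [integral_mul_const, hint, one_mul]
    rw [abs_mul, abs_of_pos (Real.rpow_pos_of_pos hε _)]
    calc ε ^ (-(1 : ℝ) / 2) * |∫ s, m₁ s * (ψ (ε * s + ε) - ψ (ε * s + -ε))|
        ≤ ε ^ (-(1 : ℝ) / 2) * (2 * ε * C) :=
          mul_le_mul_of_nonneg_left hbd (Real.rpow_pos_of_pos hε _).le
      _ = 2 * Real.sqrt ε * C := by
          rw [Real.sqrt_eq_rpow]
          rw [show ε ^ (-(1 : ℝ) / 2) * (2 * ε * C)
              = 2 * (ε ^ (-(1 : ℝ) / 2) * ε ^ (1 : ℝ)) * C by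
            rw [Real.rpow_one]; ring]
          rw [← Real.rpow_add hε]
          norm_num
  refine ⟨key, ?_⟩
  apply squeeze_zero_norm' (a := fun ε => 2 * Real.sqrt ε * C)
  · filter_upwards [self_mem_nhdsWithin] with ε hε
    exact key ε hε
  · have : Tendsto (fun ε : ℝ => 2 * Real.sqrt ε * C) (nhds 0)
        (nhds (2 * Real.sqrt 0 * C)) :=
      ((continuous_const.mul Real.continuous_sqrt).mul continuous_const).tendsto 0
    simpa using this.mono_left nhdsWithin_le_nhds
end
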